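/- Let I ⊂ K[x_1,x_2,x_3] be a monomial ideal generated in a single degree. Then I is polymatroidal if and only if I has linear quotients with respect to the reverse lexicographical ordering of the minimal generators induced by every ordering of the variables. -/
import Mathlib


/-- A monomial in `n` variables, given by its exponent vector. -/
abbrev Mon (n : ℕ) := Fin n → ℕ

/-- Total degree of a monomial. -/
def mdeg {n : ℕ} (u : Mon n) : ℕ := ∑ i, u i

/-- The exponent vector of `x_j * (u / x_i)`. -/
def exch {n : ℕ} (u : Mon n) (i j : Fin n) : Mon n :=
  fun l => u l - (if l = i then 1 else 0) + (if l = j then 1 else 0)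

/-- Membership of the monomial `w` in the monomial ideal generated by the set `G`. -/
def memI {n : ℕ} (G : Set (Mon n)) (w : Mon n) : Prop :=
  ∃ u ∈ G, ∀ l, u l ≤ w l

/-- `G` (the set of minimal generators, all of one degree) is polymatroidal: the
exchange property holds. -/
def IsPolymatroidal {n : ℕ} (G : Set (Mon n)) : Prop :=
  ∀ u ∈ G, ∀ v ∈ G, ∀ i, v i < u i → ∃ j, u j < v j ∧ memI G (exch u i j)

/-- The (strict) lexicographic order on monomials of a common degree, induced by the
variable ordering `x_{σ 0} > x_{σ 1} > ⋯ > x_{σ (n-1)}`. -/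
def lexGT {n : ℕ} (σ : Fin n → Fin n) (u v : Mon n) : Prop :=
  ∃ i, v (σ i) < u (σ i) ∧ ∀ k, k < i → u (σ k) = v (σ k)

/-- `u ≥_lex v` with respect to the variable ordering given by `σ`. -/
def lexGE {n : ℕ} (σ : Fin n → Fin n) (u v : Mon n) : Prop :=
  u = v ∨ lexGT σ u v

/-- The (strict) reverse lexicographic order on monomials of a common degree, induced by
the variable ordering `x_{σ 0} > x_{σ 1} > ⋯ > x_{σ (n-1)}`. -/
def rlexGT {n : ℕ} (σ : Fin n → Fin n) (u v : Mon n) : Prop :=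
  ∃ i, u (σ i) < v (σ i) ∧ ∀ k, i < k → u (σ k) = v (σ k)

/-- `G` has linear quotients with respect to the order `gt`: for every `u ∈ G` the colon
ideal `(v ∈ G : gt v u) : u` is generated by variables, i.e. for every `v ∈ G` with
`gt v u` there is a variable `x_i` dividing `v : u` with `x_i·u` in the ideal generated
by the `gt`-larger generators. -/
def LinQuot {n : ℕ} (G : Set (Mon n)) (gt : Mon n → Mon n → Prop) : Prop :=
  ∀ u ∈ G, ∀ v ∈ G, gt v u →
    ∃ i, u i < v i ∧
      ∃ w ∈ G, gt w u ∧ ∀ l, w l ≤ u l + (if l = i then 1 else 0)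

section Aux

@[simp] lemma mvec0 (a b c : Fin 3) : ![a,b,c] 0 = a := rfl
@[simp] lemma mvec1 (a b c : Fin 3) : ![a,b,c] 1 = b := rfl
@[simp] lemma mvec2 (a b c : Fin 3) : ![a,b,c] 2 = c := rfl

lemma fin3_cases : ∀ (x a b c : Fin 3), a ≠ b → b ≠ c → a ≠ c → x = a ∨ x = b ∨ x = c := by
  decide

lemma bij3 : ∀ (a b c : Fin 3), a ≠ b → b ≠ c → a ≠ c → Function.Bijective ![a, b, c] := by
  decide

lemma sum3 {a b c : Fin 3} (hab : a ≠ b) (hbc : b ≠ c) (hac : a ≠ c) (f : Mon 3) :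
    mdeg f = f a + f b + f c := by
  fin_cases a <;> fin_cases b <;> fin_cases c <;> simp_all [mdeg, Fin.sum_univ_three] <;> omega

lemma exch_fst {n : ℕ} (u : Mon n) {i j : Fin n} (hij : i ≠ j) : exch u i j i = u i - 1 := by
  simp [exch, hij]

lemma exch_snd {n : ℕ} (u : Mon n) {i j : Fin n} (hij : i ≠ j) : exch u i j j = u j + 1 := by
  simp [exch, Ne.symm hij]

lemma exch_other {n : ℕ} (u : Mon n) {i j l : Fin n} (hli : l ≠ i) (hlj : l ≠ j) :
    exch u i j l = u l := by
  simp [exch, hli, hlj]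

lemma exists_sub {n : ℕ} (f g : Fin n → ℕ) (hle : ∀ l, f l ≤ g l)
    (hsum : (∑ l, g l) = (∑ l, f l) + 1) :
    ∃ m, g m = f m + 1 ∧ ∀ l, l ≠ m → f l = g l := by
  have key : ∑ l, (g l - f l) = 1 := by
    have h2 : ∑ l, g l = ∑ l, (f l + (g l - f l)) :=
      Finset.sum_congr rfl (fun l _ => (Nat.add_sub_cancel' (hle l)).symm)
    rw [Finset.sum_add_distrib] at h2
    omega
  have hex : ∃ m : Fin n, 0 < g m - f m := by
    by_contra h
    push_neg at h
    have : ∑ l, (g l - f l) = 0 := Finset.sum_eq_zero (fun l _ => by have := h l; omega)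
    omega
  obtain ⟨m, hm⟩ := hex
  have hsplit := Finset.add_sum_erase Finset.univ (fun l => g l - f l) (Finset.mem_univ m)
  have hz : ∑ l ∈ Finset.univ.erase m, (g l - f l) = 0 := by omega
  refine ⟨m, by have := hle m; omega, fun l hl => ?_⟩
  have h0 : g l - f l = 0 :=
    Finset.sum_eq_zero_iff.mp hz l (Finset.mem_erase.mpr ⟨hl, Finset.mem_univ l⟩)
  have := hle l
  omega

lemma mon_eq {n : ℕ} {w z : Mon n} (hle : ∀ l, w l ≤ z l) (h : mdeg w = mdeg z) : w = z := by
  funext l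
  by_contra hne
  have hlt : w l < z l := lt_of_le_of_ne (hle l) hne
  have hs : mdeg w < mdeg z :=
    Finset.sum_lt_sum (fun i _ => hle i) ⟨l, Finset.mem_univ l, hlt⟩
  omega

lemma mdeg_exch {n : ℕ} {u : Mon n} {i j : Fin n} (hij : i ≠ j) (hi : 1 ≤ u i) :
    mdeg (exch u i j) = mdeg u := by
  have hl : ∀ l : Fin n,
      exch u i j l + (if l = i then 1 else 0) = u l + (if l = j then 1 else 0) := by
    intro l
    by_cases h1 : l = i
    · rw [h1, exch_fst u hij, if_pos rfl, if_neg hij]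
      omega
    · by_cases h2 : l = j
      · rw [h2, exch_snd u hij, if_neg (Ne.symm hij), if_pos rfl]
      · rw [exch_other u h1 h2, if_neg h1, if_neg h2]
  have c1 : mdeg (exch u i j) + 1 = ∑ l, (exch u i j l + if l = i then 1 else 0) := by
    rw [Finset.sum_add_distrib]
    simp [mdeg, Finset.sum_ite_eq']
  have c2 : (∑ l : Fin n, (u l + if l = j then 1 else 0)) = mdeg u + 1 := by
    rw [Finset.sum_add_distrib]
    simp [mdeg, Finset.sum_ite_eq']
  have c3 := Finset.sum_congr rfl (fun l (_ : l ∈ Finset.univ) => hl l)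
  rw [c3, c2] at c1
  omega

lemma decomp {u w : Mon 3} {j : Fin 3}
    (hle : ∀ l, w l ≤ u l + (if l = j then 1 else 0)) (hdw : mdeg w = mdeg u) :
    w = u ∨ ∃ m, m ≠ j ∧ 1 ≤ u m ∧ w = exch u m j := by
  have hsum : (∑ l, (u l + if l = j then 1 else 0)) = (∑ l, w l) + 1 := by
    rw [Finset.sum_add_distrib]
    have h1 : (∑ l : Fin 3, if l = j then 1 else 0) = 1 := by simp
    rw [h1]
    simp only [mdeg] at hdw
    omega
  obtain ⟨m, hm, hrest⟩ := exists_sub w (fun l => u l + if l = j then 1 else 0) hle hsum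
  by_cases hmj : m = j
  · left
    rw [if_pos hmj] at hm
    funext l
    by_cases hlm : l = m
    · rw [hlm]; omega
    · have h := hrest l hlm
      have hlj : l ≠ j := fun h' => hlm (h'.trans hmj.symm)
      rw [if_neg hlj] at h
      omega
  · right
    rw [if_neg hmj] at hm
    refine ⟨m, hmj, by omega, ?_⟩
    funext l
    by_cases hlm : l = m
    · rw [hlm, exch_fst u hmj]
      omega
    · have h := hrest l hlm
      by_cases hlj : l = j
      · rw [hlj, exch_snd u hmj]
        rw [hlj, if_pos rfl] at h
        omega
      · rw [exch_other u hlm hlj]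
        rw [if_neg hlj] at h
        omega

lemma rlex_irrefl {σ : Fin 3 → Fin 3} {u : Mon 3} (h : rlexGT σ u u) : False := by
  obtain ⟨p, hp, _⟩ := h
  exact lt_irrefl _ hp

lemma forwd {d : ℕ} {G : Set (Mon 3)} (hdeg : ∀ u ∈ G, mdeg u = d)
    (hP : IsPolymatroidal G) (σ : Fin 3 → Fin 3) (hσ : Function.Bijective σ) :
    LinQuot G (rlexGT σ) := by
  intro u hu v hv hgt
  obtain ⟨i, hvi, hbey⟩ := hgt
  obtain ⟨j, huj, w, hwG, hwle⟩ := hP u hu v hv (σ i) hvi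
  have hji : σ i ≠ j := by
    intro h
    rw [h] at hvi
    omega
  have hexd : mdeg (exch u (σ i) j) = mdeg u := mdeg_exch hji (by omega)
  have hweq : w = exch u (σ i) j := by
    refine mon_eq hwle ?_
    rw [hexd, hdeg w hwG, hdeg u hu]
  have hG : exch u (σ i) j ∈ G := hweq ▸ hwG
  refine ⟨j, huj, exch u (σ i) j, hG, ⟨i, ?_, ?_⟩, ?_⟩
  · rw [exch_fst u hji]
    omega
  · intro k hk
    have h1 : σ k ≠ σ i := by
      intro h
      have h2 := hσ.injective h
      rw [h2] at hk
      exact lt_irrefl _ hk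
    have h2 : σ k ≠ j := by
      intro h
      rw [← h] at huj
      rw [hbey k hk] at huj
      exact lt_irrefl _ huj
    rw [exch_other u h1 h2]
  · intro l
    simp only [exch]
    split <;> split <;> omega

lemma lemma1 {d : ℕ} {G : Set (Mon 3)} (hdeg : ∀ u ∈ G, mdeg u = d)
    {a b c : Fin 3} (hab : a ≠ b) (hbc : b ≠ c) (hac : a ≠ c)
    (hLQ : LinQuot G (rlexGT ![a, b, c]))
    {u v : Mon 3} (hu : u ∈ G) (hv : v ∈ G)
    (hc : v c < u c) (ha : v a ≤ u a) :
    u b < v b ∧ exch u c b ∈ G := by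
  have hgt : rlexGT ![a, b, c] v u := by
    refine ⟨2, by simpa using hc, ?_⟩
    intro k hk
    fin_cases k <;> exact absurd hk (by decide)
  obtain ⟨i, hui, w, hwG, hwgt, hwle⟩ := hLQ u hu v hv hgt
  have hib : i = b := by
    rcases fin3_cases i a b c hab hbc hac with h | h | h
    · rw [h] at hui; omega
    · exact h
    · rw [h] at hui; omega
  rw [hib] at hui
  simp only [hib] at hwle
  have hdw : mdeg w = mdeg u := by rw [hdeg w hwG, hdeg u hu]
  rcases decomp hwle hdw with rfl | ⟨m, hmb, hm1, rfl⟩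
  · exact absurd hwgt rlex_irrefl
  · rcases fin3_cases m a b c hab hbc hac with h | h | h
    · exfalso
      rw [h] at hwgt
      obtain ⟨p, hp1, hp2⟩ := hwgt
      rcases fin3_cases p 0 1 2 (by decide) (by decide) (by decide) with hp | hp | hp
      · have h2 := hp2 1 (by rw [hp]; decide)
        simp only [mvec1] at h2
        rw [exch_snd u hab] at h2
        omega
      · rw [hp] at hp1
        simp only [mvec1] at hp1
        rw [exch_snd u hab] at hp1
        omega
      · rw [hp] at hp1
        simp only [mvec2] at hp1
        rw [exch_other u (Ne.symm hac) (Ne.symm hbc)] at hp1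
        omega
    · exact absurd h hmb
    · rw [h] at hwG
      exact ⟨hui, hwG⟩

lemma lemma2 {d : ℕ} {G : Set (Mon 3)} (hdeg : ∀ u ∈ G, mdeg u = d)
    {a b c : Fin 3} (hab : a ≠ b) (hbc : b ≠ c) (hac : a ≠ c)
    (hLQ : LinQuot G (rlexGT ![b, c, a]))
    {u v : Mon 3} (hu : u ∈ G) (hv : v ∈ G)
    (hc : v c < u c) (hA : u a < v a) (hB : u b < v b) :
    exch v a c ∈ G := by
  have hgt : rlexGT ![b, c, a] u v := by
    refine ⟨2, by simpa using hA, ?_⟩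
    intro k hk
    fin_cases k <;> exact absurd hk (by decide)
  obtain ⟨i, hvi, w, hwG, hwgt, hwle⟩ := hLQ v hv u hu hgt
  have hic : i = c := by
    rcases fin3_cases i a b c hab hbc hac with h | h | h
    · rw [h] at hvi; omega
    · rw [h] at hvi; omega
    · exact h
  simp only [hic] at hwle
  have hdw : mdeg w = mdeg v := by rw [hdeg w hwG, hdeg v hv]
  rcases decomp hwle hdw with rfl | ⟨m, hmc, hm1, rfl⟩
  · exact absurd hwgt rlex_irrefl
  · rcases fin3_cases m a b c hab hbc hac with h | h | h
    · rw [h] at hwG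
      exact hwG
    · exfalso
      rw [h] at hwgt
      obtain ⟨p, hp1, hp2⟩ := hwgt
      rcases fin3_cases p 0 1 2 (by decide) (by decide) (by decide) with hp | hp | hp
      · have h2 := hp2 1 (by rw [hp]; decide)
        simp only [mvec1] at h2
        rw [exch_snd v hbc] at h2
        omega
      · rw [hp] at hp1
        simp only [mvec1] at hp1
        rw [exch_snd v hbc] at hp1
        omega
      · rw [hp] at hp1
        simp only [mvec2] at hp1
        rw [exch_other v hab hac] at hp1
        omega
    · exact absurd h hmc

lemma backd {d : ℕ} {G : Set (Mon 3)} (hdeg : ∀ u ∈ G, mdeg u = d)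
    (hLQ : ∀ σ : Fin 3 → Fin 3, Function.Bijective σ → LinQuot G (rlexGT σ)) :
    ∀ (k : ℕ) {a b c : Fin 3}, a ≠ b → b ≠ c → a ≠ c →
      ∀ {u v : Mon 3}, u ∈ G → v ∈ G → v c < u c → u c - v c ≤ k →
        ∃ j, u j < v j ∧ exch u c j ∈ G := by
  intro k
  induction k with
  | zero =>
    intro a b c _ _ _ u v _ _ hc hk
    omega
  | succ k ih =>
    intro a b c hab hbc hac u v hu hv hc hk
    by_cases hA : v a ≤ u a
    · obtain ⟨h1, h2⟩ := lemma1 hdeg hab hbc hac (hLQ _ (bij3 a b c hab hbc hac)) hu hv hc hA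
      exact ⟨b, h1, h2⟩
    by_cases hB : v b ≤ u b
    · obtain ⟨h1, h2⟩ :=
        lemma1 hdeg hab.symm hac hbc (hLQ _ (bij3 b a c hab.symm hac hbc)) hu hv hc hB
      exact ⟨a, h1, h2⟩
    push_neg at hA hB
    have hvac : exch v a c ∈ G :=
      lemma2 hdeg hab hbc hac (hLQ _ (bij3 b c a hbc (Ne.symm hac) hab.symm)) hu hv hc hA hB
    have hsu := sum3 hab hbc hac u
    have hsv := sum3 hab hbc hac v
    have hdu := hdeg u hu
    have hdv := hdeg v hv
    have e1 : exch v a c a = v a - 1 := exch_fst v hac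
    have e2 : exch v a c b = v b := exch_other v hab.symm hbc
    have e3 : exch v a c c = v c + 1 := exch_snd v hac
    have hc' : exch v a c c < u c := by rw [e3]; omega
    have hk' : u c - exch v a c c ≤ k := by rw [e3]; omega
    obtain ⟨j, hj, hjG⟩ := ih hab hbc hac hu hvac hc' hk'
    rcases fin3_cases j a b c hab hbc hac with h | h | h
    · rw [h, e1] at hj
      rw [h] at hjG
      exact ⟨a, by omega, hjG⟩
    · rw [h, e2] at hj
      rw [h] at hjG
      exact ⟨b, hj, hjG⟩
    · rw [h, e3] at hj
      rw [e3] at hc'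
      omega

end Aux

/-- A monomial ideal in `K[x_1,x_2,x_3]` generated in a single degree is polymatroidal
if and only if it has linear quotients with respect to the reverse lexicographic
ordering of the minimal generators induced by every ordering of the variables. -/
theorem stmt_7 {d : ℕ} (G : Set (Mon 3)) (hdeg : ∀ u ∈ G, mdeg u = d) :
    IsPolymatroidal G ↔
      ∀ σ : Fin 3 → Fin 3, Function.Bijective σ → LinQuot G (rlexGT σ) := by
  constructor
  · intro hP σ hσ
    exact forwd hdeg hP σ hσ
  · intro hAll u hu v hv i hvi
    have h3 : ∀ i : Fin 3, ∃ a b : Fin 3, a ≠ b ∧ b ≠ i ∧ a ≠ i := by decide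
    obtain ⟨a, b, hab, hbi, hai⟩ := h3 i
    obtain ⟨j, hj, hjG⟩ := backd hdeg hAll (u i - v i) hab hbi hai hu hv hvi (le_refl _)
    exact ⟨j, hj, exch u i j, hjG, fun l => le_refl _⟩
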